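/- Let θ ∈ (−π/2, π/2), r₀ > 0, and let γ be the half-line {r·e^{iθ} : r ≥ r₀} ⊂ ℍ. For every R > 0 there exist φ₁ ∈ (−π/2, θ) and φ₂ ∈ (θ, π/2) with d_ℍ(e^{iθ}, e^{iφ₁}) = d_ℍ(e^{iθ}, e^{iφ₂}) = R, such that the hyperbolic R-neighbourhood of γ satisfies {z ∈ ℍ : inf_{w ∈ γ} d_ℍ(z, w) < R} = D_ℍ(r₀·e^{iθ}, R) ∪ {r·e^{iφ} : r > r₀ and φ ∈ (φ₁, φ₂)}, where D_ℍ(w, R) = {z ∈ ℍ : d_ℍ(z, w) < R} is the open hyperbolic disc of centre w and radius R. -/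

import Mathlib

open Complex Filter Topology

/-- Pseudo-hyperbolic distance on the right half-plane ℍ = {Re z > 0}. -/
noncomputable def rhoH (z w : ℂ) : ℝ := ‖(z - w) / (z + (starRingEnd ℂ) w)‖

/-- Hyperbolic distance on the right half-plane. -/
noncomputable def dH (z w : ℂ) : ℝ := (1/2) * Real.log ((1 + rhoH z w) / (1 - rhoH z w))

/-- `p` is a hyperbolic projection of `z` onto the curve `γ : [0,∞) → ℍ`. -/
def IsProjH (γ : ℝ → ℂ) (z p : ℂ) : Prop :=
  (∃ t ≥ (0:ℝ), p = γ t) ∧ ∀ t ≥ (0:ℝ), dH z p ≤ dH z (γ t)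

/-- `f` is a hyperbolic holomorphic self-map of the right half-plane with
Denjoy–Wolff point ∞: it preserves ℍ, is holomorphic on ℍ, its iterates tend to ∞
uniformly on compact subsets of ℍ, and `f(z)/z → c` for some `c > 1` as `z → ∞`
within every sector `{|arg z| < φ}`, `φ ∈ (0, π/2)`. -/
def HyperbolicAtInf (f : ℂ → ℂ) : Prop :=
  (∀ z : ℂ, 0 < z.re → 0 < (f z).re) ∧
  DifferentiableOn ℂ f {z : ℂ | 0 < z.re} ∧
  (∀ K : Set ℂ, K ⊆ {z : ℂ | 0 < z.re} → IsCompact K →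
    ∀ M : ℝ, ∃ N : ℕ, ∀ n ≥ N, ∀ z ∈ K, M < ‖f^[n] z‖) ∧
  (∃ c : ℝ, 1 < c ∧ ∀ φ ∈ Set.Ioo (0:ℝ) (Real.pi/2), ∀ ε > (0:ℝ), ∃ R : ℝ,
    ∀ z : ℂ, 0 < z.re → |z.arg| < φ → R < ‖z‖ →
      ‖f z / z - (c:ℂ)‖ < ε)

/-! The dilations `z ↦ t z`, `t > 0`, are isometries of ℍ. For `z = r e^{iφ}` the pseudo-hyperbolic
distance from `z` to `s e^{iθ}` is an increasing function of `r/s + s/r`, so on the ray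
`{s e^{iθ} : s ≥ r₀}` the point nearest to `z` is `r e^{iθ}` when `r ≥ r₀` and `r₀ e^{iθ}` otherwise.
At equal radii the distance is `|arcRho θ φ|`, where `arcRho θ` increases strictly from `-1` to `1`
on `[-π/2, π/2]`; so the points `r e^{iφ}` with `r > r₀` that lie within `R` of the ray fill the
sector between the two angles at which `|arcRho θ φ| = tanh R`. -/

open Set
open scoped Real

section HyperbolicDistance

variable {z w : ℂ}

lemma rhoH_nonneg (z w : ℂ) : 0 ≤ rhoH z w := norm_nonneg _

lemma rhoH_comm (z w : ℂ) : rhoH z w = rhoH w z := by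
  rw [rhoH, rhoH, norm_div, norm_div, norm_sub_rev, ← Complex.norm_conj (z + _), map_add,
    Complex.conj_conj, add_comm]

lemma rhoH_lt_one (hz : 0 < z.re) (hw : 0 < w.re) : rhoH z w < 1 := by
  have hsum : 0 < (z + (starRingEnd ℂ) w).re := by simp only [add_re, conj_re]; linarith
  have hne : z + (starRingEnd ℂ) w ≠ 0 := fun h => by simp [h] at hsum
  rw [rhoH, norm_div, div_lt_one (norm_pos_iff.mpr hne), ← sq_lt_sq₀ (norm_nonneg _)
    (norm_nonneg _), Complex.sq_norm, Complex.sq_norm]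
  simp only [Complex.normSq_apply, sub_re, sub_im, add_re, add_im, conj_re, conj_im]
  nlinarith [mul_pos hz hw]

lemma dH_eq_artanh_rhoH (hz : 0 < z.re) (hw : 0 < w.re) :
    dH z w = Real.artanh (rhoH z w) :=
  (Real.artanh_eq_half_log ⟨by linarith [rhoH_nonneg z w], (rhoH_lt_one hz hw).le⟩).symm

lemma dH_lt_iff_rhoH_lt_tanh (hz : 0 < z.re) (hw : 0 < w.re) (R : ℝ) :
    dH z w < R ↔ rhoH z w < Real.tanh R := by
  rw [dH_eq_artanh_rhoH hz hw, ← Real.artanh_lt_artanh_iff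
    ⟨by linarith [rhoH_nonneg z w], rhoH_lt_one hz hw⟩
    ⟨Real.neg_one_lt_tanh R, Real.tanh_lt_one R⟩, Real.artanh_tanh]

lemma dH_eq_of_rhoH_eq_tanh (hz : 0 < z.re) (hw : 0 < w.re) {R : ℝ}
    (h : rhoH z w = Real.tanh R) : dH z w = R := by
  rw [dH_eq_artanh_rhoH hz hw, h, Real.artanh_tanh]

end HyperbolicDistance

lemma re_ofReal_mul_exp (r φ : ℝ) : ((r : ℂ) * exp (φ * I)).re = r * Real.cos φ := by
  simp [exp_ofReal_mul_I_re]

lemma im_ofReal_mul_exp (r φ : ℝ) : ((r : ℂ) * exp (φ * I)).im = r * Real.sin φ := by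
  simp [exp_ofReal_mul_I_im]

lemma re_ofReal_mul_exp_pos {r φ : ℝ} (hr : 0 < r) (hφ : φ ∈ Ioo (-(π / 2)) (π / 2)) :
    0 < ((r : ℂ) * exp (φ * I)).re := by
  rw [re_ofReal_mul_exp]; exact mul_pos hr (Real.cos_pos_of_mem_Ioo hφ)

lemma exists_polar_of_re_pos {z : ℂ} (hz : 0 < z.re) :
    ∃ r > (0 : ℝ), ∃ φ ∈ Ioo (-(π / 2)) (π / 2), z = (r : ℂ) * exp (φ * I) := by
  have harg := abs_lt.1 (abs_arg_lt_pi_div_two_iff.2 (Or.inl hz))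
  refine ⟨‖z‖, norm_pos_iff.2 fun h => by simp [h] at hz, z.arg, harg,
    (norm_mul_exp_arg_mul_I z).symm⟩

lemma rhoH_polar_sq (r s φ θ : ℝ) :
    rhoH ((r : ℂ) * exp (φ * I)) ((s : ℂ) * exp (θ * I)) ^ 2 =
      (r ^ 2 + s ^ 2 - 2 * r * s * Real.cos (φ - θ)) /
        (r ^ 2 + s ^ 2 + 2 * r * s * Real.cos (φ + θ)) := by
  rw [rhoH, Complex.sq_norm, map_div₀]
  congr 1
  · rw [Complex.normSq_apply, sub_re, sub_im, re_ofReal_mul_exp, im_ofReal_mul_exp,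
      re_ofReal_mul_exp, im_ofReal_mul_exp, Real.cos_sub]
    linear_combination r ^ 2 * Real.sin_sq_add_cos_sq φ + s ^ 2 * Real.sin_sq_add_cos_sq θ
  · rw [Complex.normSq_apply, add_re, add_im, conj_re, conj_im, re_ofReal_mul_exp,
      im_ofReal_mul_exp, re_ofReal_mul_exp, im_ofReal_mul_exp, Real.cos_add]
    linear_combination r ^ 2 * Real.sin_sq_add_cos_sq φ + s ^ 2 * Real.sin_sq_add_cos_sq θ

section RadialComparison

variable {r s₁ s₂ φ θ : ℝ}

-- The sign condition says `r/s₁ + s₁/r ≤ r/s₂ + s₂/r`.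
lemma rhoH_polar_le_of_mul_nonpos (hφ : φ ∈ Ioo (-(π / 2)) (π / 2))
    (hθ : θ ∈ Ioo (-(π / 2)) (π / 2)) (hr : 0 < r) (hs₁ : 0 < s₁) (hs₂ : 0 < s₂)
    (h : (s₂ - s₁) * (r ^ 2 - s₁ * s₂) ≤ 0) :
    rhoH ((r : ℂ) * exp (φ * I)) ((s₁ : ℂ) * exp (θ * I)) ≤
      rhoH ((r : ℂ) * exp (φ * I)) ((s₂ : ℂ) * exp (θ * I)) := by
  have hcφ := Real.cos_pos_of_mem_Ioo hφ
  have hcθ := Real.cos_pos_of_mem_Ioo hθ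
  have hden : ∀ s, 0 < s → 0 < r ^ 2 + s ^ 2 + 2 * r * s * Real.cos (φ + θ) := by
    intro s hs
    rw [Real.cos_add]
    nlinarith [mul_pos (mul_pos hr hs) (mul_pos hcφ hcθ), Real.sin_sq_add_cos_sq φ,
      Real.sin_sq_add_cos_sq θ, sq_nonneg (r - s), sq_nonneg (Real.sin φ - Real.sin θ),
      sq_nonneg (Real.sin φ + Real.sin θ), mul_pos hr hs]
  rw [← pow_le_pow_iff_left₀ (rhoH_nonneg _ _) (rhoH_nonneg _ _) two_ne_zero, rhoH_polar_sq,
    rhoH_polar_sq, div_le_div_iff₀ (hden s₁ hs₁) (hden s₂ hs₂)]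
  have hsum : 0 < Real.cos (φ - θ) + Real.cos (φ + θ) := by
    rw [Real.cos_sub, Real.cos_add]; nlinarith [mul_pos hcφ hcθ]
  nlinarith [mul_nonpos_of_nonneg_of_nonpos (mul_pos hr hsum).le h]

lemma rhoH_polar_le_of_le_of_le (hφ : φ ∈ Ioo (-(π / 2)) (π / 2))
    (hθ : θ ∈ Ioo (-(π / 2)) (π / 2)) (hr : 0 < r) (hrs₁ : r ≤ s₁) (hs₁₂ : s₁ ≤ s₂) :
    rhoH ((r : ℂ) * exp (φ * I)) ((s₁ : ℂ) * exp (θ * I)) ≤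
      rhoH ((r : ℂ) * exp (φ * I)) ((s₂ : ℂ) * exp (θ * I)) :=
  rhoH_polar_le_of_mul_nonpos hφ hθ hr (hr.trans_le hrs₁) (hr.trans_le (hrs₁.trans hs₁₂))
    (mul_nonpos_of_nonneg_of_nonpos (sub_nonneg.2 hs₁₂) (by nlinarith))

lemma rhoH_polar_same_radius_le (hφ : φ ∈ Ioo (-(π / 2)) (π / 2))
    (hθ : θ ∈ Ioo (-(π / 2)) (π / 2)) (hr : 0 < r) (hs : 0 < s₂) :
    rhoH ((r : ℂ) * exp (φ * I)) ((r : ℂ) * exp (θ * I)) ≤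
      rhoH ((r : ℂ) * exp (φ * I)) ((s₂ : ℂ) * exp (θ * I)) :=
  rhoH_polar_le_of_mul_nonpos hφ hθ hr hr hs (by nlinarith [mul_nonneg hr.le (sq_nonneg (s₂ - r))])

end RadialComparison

/-- The signed pseudo-hyperbolic distance from `e^{iθ}` to `e^{iφ}` along the unit circle. -/
noncomputable def arcRho (θ φ : ℝ) : ℝ := Real.sin ((φ - θ) / 2) / Real.cos ((φ + θ) / 2)

section ArcRho

variable {θ : ℝ}

lemma rhoH_polar_same_radius {r : ℝ} (hr : r ≠ 0) (φ θ : ℝ) :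
    rhoH ((r : ℂ) * exp (φ * I)) ((r : ℂ) * exp (θ * I)) = |arcRho θ φ| := by
  have hsin : Real.sin ((φ - θ) / 2) ^ 2 = (1 - Real.cos (φ - θ)) / 2 := by
    rw [Real.sin_sq, Real.cos_sq, show 2 * ((φ - θ) / 2) = φ - θ by ring]; ring
  have hcos : Real.cos ((φ + θ) / 2) ^ 2 = (1 + Real.cos (φ + θ)) / 2 := by
    rw [Real.cos_sq, show 2 * ((φ + θ) / 2) = φ + θ by ring]; ring
  rw [← sq_eq_sq₀ (rhoH_nonneg _ _) (abs_nonneg _), sq_abs, rhoH_polar_sq, arcRho, div_pow,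
    hsin, hcos, show r ^ 2 + r ^ 2 - 2 * r * r * Real.cos (φ - θ) =
      (4 * r ^ 2) * ((1 - Real.cos (φ - θ)) / 2) by ring,
    show r ^ 2 + r ^ 2 + 2 * r * r * Real.cos (φ + θ) =
      (4 * r ^ 2) * ((1 + Real.cos (φ + θ)) / 2) by ring,
    mul_div_mul_left _ _ (by positivity)]

lemma cos_half_add_pos (hθ : θ ∈ Ioo (-(π / 2)) (π / 2)) {φ : ℝ}
    (hφ : φ ∈ Icc (-(π / 2)) (π / 2)) : 0 < Real.cos ((φ + θ) / 2) :=
  Real.cos_pos_of_mem_Ioo ⟨by linarith [hθ.1, hφ.1], by linarith [hθ.2, hφ.2]⟩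

lemma arcRho_strictMonoOn (hθ : θ ∈ Ioo (-(π / 2)) (π / 2)) :
    StrictMonoOn (arcRho θ) (Icc (-(π / 2)) (π / 2)) := by
  intro a ha b hb hab
  rw [arcRho, arcRho, div_lt_div_iff₀ (cos_half_add_pos hθ ha) (cos_half_add_pos hθ hb)]
  have key : Real.sin ((b - θ) / 2) * Real.cos ((a + θ) / 2) -
      Real.sin ((a - θ) / 2) * Real.cos ((b + θ) / 2) = Real.cos θ * Real.sin ((b - a) / 2) := by
    rw [show (a + θ) / 2 = (a - θ) / 2 + θ by ring, show (b + θ) / 2 = (b - θ) / 2 + θ by ring,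
      show (b - a) / 2 = (b - θ) / 2 - (a - θ) / 2 by ring, Real.cos_add, Real.cos_add,
      Real.sin_sub]
    ring
  have hsin : 0 < Real.sin ((b - a) / 2) :=
    Real.sin_pos_of_pos_of_lt_pi (by linarith) (by linarith [ha.1, hb.2, Real.pi_pos])
  nlinarith [mul_pos (Real.cos_pos_of_mem_Ioo hθ) hsin]

lemma arcRho_continuousOn (hθ : θ ∈ Ioo (-(π / 2)) (π / 2)) :
    ContinuousOn (arcRho θ) (Icc (-(π / 2)) (π / 2)) :=
  ContinuousOn.div (by fun_prop) (by fun_prop) fun _ hφ => (cos_half_add_pos hθ hφ).ne'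

lemma arcRho_self (θ : ℝ) : arcRho θ θ = 0 := by simp [arcRho]

lemma arcRho_pi_div_two (hθ : θ ∈ Ioo (-(π / 2)) (π / 2)) : arcRho θ (π / 2) = 1 := by
  rw [arcRho, show (π / 2 - θ) / 2 = π / 2 - (π / 2 + θ) / 2 by ring, Real.sin_pi_div_two_sub,
    div_self (cos_half_add_pos hθ ⟨by linarith [Real.pi_pos], le_rfl⟩).ne']

lemma arcRho_neg_pi_div_two (hθ : θ ∈ Ioo (-(π / 2)) (π / 2)) : arcRho θ (-(π / 2)) = -1 := by
  have hne := (cos_half_add_pos hθ ⟨le_rfl, by linarith [Real.pi_pos]⟩).ne'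
  rw [arcRho, show (-(π / 2) - θ) / 2 = -((-(π / 2) + θ) / 2 + π / 2) by ring, Real.sin_neg,
    Real.sin_add_pi_div_two, neg_div, div_self hne]

lemma exists_arcRho_eq_neg_and_eq (hθ : θ ∈ Ioo (-(π / 2)) (π / 2)) {T : ℝ}
    (hT : T ∈ Ioo 0 1) :
    ∃ φ₁ ∈ Ioo (-(π / 2)) θ, ∃ φ₂ ∈ Ioo θ (π / 2), arcRho θ φ₁ = -T ∧ arcRho θ φ₂ = T := by
  obtain ⟨φ₁, hφ₁, h₁⟩ : -T ∈ arcRho θ '' Ioo (-(π / 2)) θ :=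
    intermediate_value_Ioo hθ.1.le ((arcRho_continuousOn hθ).mono (Icc_subset_Icc le_rfl hθ.2.le))
      (by rw [arcRho_neg_pi_div_two hθ, arcRho_self]; exact ⟨by linarith [hT.2], by linarith [hT.1]⟩)
  obtain ⟨φ₂, hφ₂, h₂⟩ : T ∈ arcRho θ '' Ioo θ (π / 2) :=
    intermediate_value_Ioo hθ.2.le ((arcRho_continuousOn hθ).mono (Icc_subset_Icc hθ.1.le le_rfl))
      (by rw [arcRho_self, arcRho_pi_div_two hθ]; exact hT)
  exact ⟨φ₁, hφ₁, φ₂, hφ₂, h₁, h₂⟩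

lemma abs_arcRho_lt_iff (hθ : θ ∈ Ioo (-(π / 2)) (π / 2)) {T φ₁ φ₂ φ : ℝ}
    (hφ₁ : φ₁ ∈ Icc (-(π / 2)) (π / 2)) (hφ₂ : φ₂ ∈ Icc (-(π / 2)) (π / 2))
    (h₁ : arcRho θ φ₁ = -T) (h₂ : arcRho θ φ₂ = T) (hφ : φ ∈ Icc (-(π / 2)) (π / 2)) :
    |arcRho θ φ| < T ↔ φ ∈ Ioo φ₁ φ₂ := by
  rw [abs_lt, ← h₁, ← h₂, (arcRho_strictMonoOn hθ).lt_iff_lt hφ₁ hφ,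
    (arcRho_strictMonoOn hθ).lt_iff_lt hφ hφ₂]
  rfl

end ArcRho

lemma dH_exp_mul_I_eq {θ φ R : ℝ} (hθ : θ ∈ Ioo (-(π / 2)) (π / 2))
    (hφ : φ ∈ Ioo (-(π / 2)) (π / 2)) (h : |arcRho θ φ| = Real.tanh R) :
    dH (exp (θ * I)) (exp (φ * I)) = R := by
  have hρ := rhoH_polar_same_radius one_ne_zero φ θ
  have hre := fun ψ (hψ : ψ ∈ Ioo (-(π / 2)) (π / 2)) => re_ofReal_mul_exp_pos one_pos hψ
  simp only [ofReal_one, one_mul] at hρ hre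
  exact dH_eq_of_rhoH_eq_tanh (hre θ hθ) (hre φ hφ) (by rw [rhoH_comm, hρ, h])

theorem ray_neighbourhood_eq {θ r₀ R φ₁ φ₂ : ℝ} (hθ : θ ∈ Ioo (-(π / 2)) (π / 2))
    (hr₀ : 0 < r₀) (hφ₁ : -(π / 2) ≤ φ₁) (hφ₂ : φ₂ ≤ π / 2)
    (hsector : ∀ φ ∈ Ioo (-(π / 2)) (π / 2), |arcRho θ φ| < Real.tanh R ↔ φ ∈ Ioo φ₁ φ₂) :
    {z : ℂ | 0 < z.re ∧ ∃ r ≥ r₀, dH z ((r : ℂ) * exp (θ * I)) < R} =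
      {z : ℂ | 0 < z.re ∧ dH z ((r₀ : ℂ) * exp (θ * I)) < R} ∪
        {z : ℂ | ∃ r > r₀, ∃ φ ∈ Ioo φ₁ φ₂, z = (r : ℂ) * exp (φ * I)} := by
  ext z
  constructor
  · rintro ⟨hz, s, hs, hd⟩
    obtain ⟨r, hr, φ, hφ, rfl⟩ := exists_polar_of_re_pos hz
    rw [dH_lt_iff_rhoH_lt_tanh hz (re_ofReal_mul_exp_pos (hr₀.trans_le hs) hθ)] at hd
    rcases le_or_gt r r₀ with hrr₀ | hrr₀
    · refine Or.inl ⟨hz, (dH_lt_iff_rhoH_lt_tanh hz (re_ofReal_mul_exp_pos hr₀ hθ) R).2 ?_⟩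
      exact (rhoH_polar_le_of_le_of_le hφ hθ hr hrr₀ hs).trans_lt hd
    · refine Or.inr ⟨r, hrr₀, φ, (hsector φ hφ).1 ?_, rfl⟩
      rw [← rhoH_polar_same_radius hr.ne']
      exact (rhoH_polar_same_radius_le hφ hθ hr (hr₀.trans_le hs)).trans_lt hd
  · rintro (⟨hz, hd⟩ | ⟨r, hrr₀, φ, hφ, rfl⟩)
    · exact ⟨hz, r₀, le_rfl, hd⟩
    · have hφ' : φ ∈ Ioo (-(π / 2)) (π / 2) := ⟨hφ₁.trans_lt hφ.1, hφ.2.trans_le hφ₂⟩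
      have hr := hr₀.trans hrr₀
      have hz := re_ofReal_mul_exp_pos hr hφ'
      refine ⟨hz, r, hrr₀.le, (dH_lt_iff_rhoH_lt_tanh hz (re_ofReal_mul_exp_pos hr hθ) R).2 ?_⟩
      rw [rhoH_polar_same_radius hr.ne']
      exact (hsector φ hφ').2 hφ

/-- the hyperbolic R-neighbourhood of the half-line
{re^{iθ} : r ≥ r₀} is the union of the hyperbolic disc D_ℍ(r₀e^{iθ}, R) and the
sector {re^{iφ} : r > r₀, φ ∈ (φ₁, φ₂)}, where d_ℍ(e^{iθ}, e^{iφⱼ}) = R.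
(Note: inf_{w∈γ} d_ℍ(z,w) < R is expressed as ∃ r ≥ r₀, d_ℍ(z, re^{iθ}) < R.) -/
theorem stmt15 (θ : ℝ) (hθ : θ ∈ Set.Ioo (-(Real.pi/2)) (Real.pi/2))
    (r₀ : ℝ) (hr₀ : 0 < r₀) (R : ℝ) (hR : 0 < R) :
    ∃ φ₁ ∈ Set.Ioo (-(Real.pi/2)) θ, ∃ φ₂ ∈ Set.Ioo θ (Real.pi/2),
      dH (Complex.exp ((θ : ℂ) * I)) (Complex.exp ((φ₁ : ℂ) * I)) = R ∧
      dH (Complex.exp ((θ : ℂ) * I)) (Complex.exp ((φ₂ : ℂ) * I)) = R ∧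
      {z : ℂ | 0 < z.re ∧ ∃ r ≥ r₀, dH z ((r : ℂ) * Complex.exp ((θ : ℂ) * I)) < R} =
        {z : ℂ | 0 < z.re ∧ dH z ((r₀ : ℂ) * Complex.exp ((θ : ℂ) * I)) < R} ∪
        {z : ℂ | ∃ r > r₀, ∃ φ ∈ Set.Ioo φ₁ φ₂, z = (r : ℂ) * Complex.exp ((φ : ℂ) * I)} := by
  have hT : Real.tanh R ∈ Ioo 0 1 :=
    ⟨by rw [Real.tanh_eq_sinh_div_cosh]; exact div_pos (Real.sinh_pos_iff.2 hR) (Real.cosh_pos R),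
      Real.tanh_lt_one R⟩
  obtain ⟨φ₁, hφ₁, φ₂, hφ₂, h₁, h₂⟩ := exists_arcRho_eq_neg_and_eq hθ hT
  have hφ₁' : φ₁ ∈ Ioo (-(π / 2)) (π / 2) := ⟨hφ₁.1, hφ₁.2.trans hθ.2⟩
  have hφ₂' : φ₂ ∈ Ioo (-(π / 2)) (π / 2) := ⟨hθ.1.trans hφ₂.1, hφ₂.2⟩
  refine ⟨φ₁, hφ₁, φ₂, hφ₂,
    dH_exp_mul_I_eq hθ hφ₁' (by rw [h₁, abs_neg, abs_of_pos hT.1]),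
    dH_exp_mul_I_eq hθ hφ₂' (by rw [h₂, abs_of_pos hT.1]),
    ray_neighbourhood_eq hθ hr₀ hφ₁.1.le hφ₂.2.le fun φ hφ => ?_⟩
  exact abs_arcRho_lt_iff hθ (Ioo_subset_Icc_self hφ₁') (Ioo_subset_Icc_self hφ₂') h₁ h₂
    (Ioo_subset_Icc_self hφ)
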